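/- arXiv:0912.1018 — 5 statements merged into one kernel-verified Lean document; each statement's English description precedes it below -/
import Mathlib

section
/- For any scalars β_1, …, β_m and any n×n matrix A over ℂ, per_{β_1+⋯+β_m}(A) = Σ Π_{j=1}^m per_{β_j}(A[I_j]), where the sum is over all ordered partitions (I_1,…,I_m) of {1,…,n} into m disjoint (possibly empty) subsets, and A[I] denotes the principal submatrix of A with rows and columns indexed by I. -/
open Finset Matrix
open scoped ComplexOrder

/-- Number of disjoint cycles (including fixed points) of a permutation. -/
def nCycles {ι : Type} [Fintype ι] [DecidableEq ι] (π : Equiv.Perm ι) : ℕ :=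
  π.cycleType.card + (Fintype.card ι - π.support.card)

/-- The α-permanent of a matrix. -/
def aperm {ι : Type} [Fintype ι] [DecidableEq ι] {R : Type} [CommRing R]
    (α : R) (A : Matrix ι ι R) : R :=
  ∑ π : Equiv.Perm ι, α ^ nCycles π * ∏ i, A i (π i)

/-- The ordinary permanent of a matrix. -/
def perm {ι : Type} [Fintype ι] [DecidableEq ι] {R : Type} [CommRing R] (A : Matrix ι ι R) : R :=
  ∑ π : Equiv.Perm ι, ∏ i, A i (π i)

/-- Principal submatrix indexed by a finite subset of the index set. -/
def subm {ι : Type} {R : Type} (A : Matrix ι ι R) (I : Finset ι) : Matrix I I R :=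
  fun i j => A i j

/-- Generalized binomial coefficient C(α, k) = α(α-1)⋯(α-k+1)/k!. -/
noncomputable def gbinom {K : Type} [Field K] (α : K) (k : ℕ) : K :=
  (∏ i ∈ Finset.range k, (α - i)) / (Nat.factorial k : K)

/-- The hafnian of a `2m × 2m` matrix,
`haf C = (1/(m! 2^m)) Σ_{π ∈ S_{2m}} c_{π(1),π(2)} ⋯ c_{π(2m-1),π(2m)}`. -/
noncomputable def hafnian {m : ℕ} (C : Matrix (Fin (2 * m)) (Fin (2 * m)) ℝ) : ℝ :=
  ((Nat.factorial m : ℝ) * 2 ^ m)⁻¹ *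
    ∑ π : Equiv.Perm (Fin (2 * m)), ∏ i : Fin m,
      C (π ⟨2 * i.1, by have := i.2; omega⟩) (π ⟨2 * i.1 + 1, by have := i.2; omega⟩)

/-- The doubled block matrix [[A, A], [A, A]]. -/
def dbl {n : ℕ} (A : Matrix (Fin n) (Fin n) ℝ) : Matrix (Fin (2 * n)) (Fin (2 * n)) ℝ :=
  fun i j => A ⟨i.1 % n, Nat.mod_lt _ (by have := i.2; omega)⟩
               ⟨j.1 % n, Nat.mod_lt _ (by have := j.2; omega)⟩

/-- The principal submatrix `A[I]`, reindexed by `Fin I.card` via the order isomorphism. -/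
def submFin {n : ℕ} (A : Matrix (Fin n) (Fin n) ℝ) (I : Finset (Fin n)) :
    Matrix (Fin I.card) (Fin I.card) ℝ :=
  fun i j => A ↑(I.orderIsoOfFin rfl i) ↑(I.orderIsoOfFin rfl j)

/-- `per_β(A, k)`: the sum over all ordered partitions of the index set into `k`
disjoint nonempty subsets `(I_1, …, I_k)` of `∏_j per_β A[I_j]`.  Ordered partitions
into nonempty parts are encoded as surjections onto `Fin k`. -/
noncomputable def apermPart {n : ℕ} (β : ℂ) (A : Matrix (Fin n) (Fin n) ℂ) (k : ℕ) : ℂ :=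
  ∑ f ∈ Finset.univ.filter (fun f : Fin n → Fin k => Function.Surjective f),
    ∏ j, aperm β (subm A (Finset.univ.filter fun i => f i = j))

/-- `per(A, k)`: as `apermPart` but with the ordinary permanent. -/
noncomputable def permPart {ι : Type} [Fintype ι] [DecidableEq ι] {R : Type} [CommRing R]
    (A : Matrix ι ι R) (k : ℕ) : R :=
  ∑ f ∈ Finset.univ.filter (fun f : ι → Fin k => Function.Surjective f),
    ∏ j, perm (subm A (Finset.univ.filter fun i => f i = j))

/-- `det(A, k)`: as `apermPart` but with the determinant. -/
noncomputable def detPart {ι : Type} [Fintype ι] [DecidableEq ι] {R : Type} [CommRing R]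
    (A : Matrix ι ι R) (k : ℕ) : R :=
  ∑ f ∈ Finset.univ.filter (fun f : ι → Fin k => Function.Surjective f),
    ∏ j, Matrix.det (subm A (Finset.univ.filter fun i => f i = j))

/-- The sum over ordered partitions of the index set into `k` nonempty subsets of the
products of the hafnians of the doubled principal submatrices. -/
noncomputable def hafPart {n : ℕ} (A : Matrix (Fin n) (Fin n) ℝ) (k : ℕ) : ℝ :=
  ∑ f ∈ Finset.univ.filter (fun f : Fin n → Fin k => Function.Surjective f),
    ∏ j, hafnian (dbl (submFin A (Finset.univ.filter fun i => f i = j)))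

/-- The average, over ordered set partitions `(I_1, …, I_k)` of the index set with
`|I_j| = t j`, of `∏_j per A[I_j]` (real part). -/
noncomputable def avgPerm {n k : ℕ} (A : Matrix (Fin n) (Fin n) ℂ) (t : Fin k → ℕ) : ℝ :=
  (∑ f ∈ Finset.univ.filter
      (fun f : Fin n → Fin k => ∀ j, (Finset.univ.filter fun i => f i = j).card = t j),
      (∏ j, perm (subm A (Finset.univ.filter fun i => f i = j))).re) /
    (Finset.univ.filter
      (fun f : Fin n → Fin k => ∀ j, (Finset.univ.filter fun i => f i = j).card = t j)).card

/-- The average, over ordered set partitions `(I_1, …, I_k)` of the index set with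
`|I_j| = t j`, of `∏_j det A[I_j]` (real part). -/
noncomputable def avgDet {n k : ℕ} (A : Matrix (Fin n) (Fin n) ℂ) (t : Fin k → ℕ) : ℝ :=
  (∑ f ∈ Finset.univ.filter
      (fun f : Fin n → Fin k => ∀ j, (Finset.univ.filter fun i => f i = j).card = t j),
      (∏ j, Matrix.det (subm A (Finset.univ.filter fun i => f i = j))).re) /
    (Finset.univ.filter
      (fun f : Fin n → Fin k => ∀ j, (Finset.univ.filter fun i => f i = j).card = t j)).card

/-!
Expanding `(β₁ + ⋯ + β_m) ^ ν(π)` colours each cycle of `π` with some `j`, with weight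
`∏ⱼ βⱼ ^ (number of cycles of colour j)`. A colouring of the cycles of `π` is the same as a
`π`-invariant colouring `f` of the indices, and a pair `(π, f)` of this kind is the same as a
colouring `f` together with a permutation `σⱼ` of each colour class `f⁻¹ j`, the cycles of `π` of
colour `j` being those of `σⱼ`. Summing over the `σⱼ` first turns the weight into
`∏ⱼ per_{βⱼ}(A[f⁻¹ j])`.
-/

noncomputable def Quotient.equivOfSurjective {α β : Type*} (s : Setoid α) (g : α → β)
    (hg : ∀ a b, g a = g b ↔ s a b) (hs : Function.Surjective g) : Quotient s ≃ β :=
  (Quotient.congrRight fun a b => (hg a b).symm.trans Setoid.ker_def.symm).trans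
    (Setoid.quotientKerEquivOfSurjective g hs)

theorem Fintype.sum_subtype_comm {α β M : Type*} [Fintype α] [Fintype β] [AddCommMonoid M]
    (p : α → β → Prop) [∀ a, Fintype {b // p a b}] [∀ b, Fintype {a // p a b}]
    (g : ∀ a b, p a b → M) :
    ∑ a, ∑ b : {b // p a b}, g a b b.2 = ∑ b, ∑ a : {a // p a b}, g a b a.2 := by
  let e : (Σ a, {b // p a b}) ≃ Σ b, {a // p a b} :=
    (Equiv.subtypeProdEquivSigmaSubtype p).symm.trans
      (((Equiv.prodComm α β).subtypeEquiv fun _ => Iff.rfl).trans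
        (Equiv.subtypeProdEquivSigmaSubtype fun b a => p a b))
  calc _ = ∑ x : Σ a, {b // p a b}, g x.1 x.2 x.2.2 := (Fintype.sum_sigma _).symm
    _ = ∑ y : Σ b, {a // p a b}, g y.2 y.1 y.2.2 := Fintype.sum_equiv e _ _ fun _ => rfl
    _ = _ := Fintype.sum_sigma _

namespace Equiv.Perm

/-- Fixed points count as cycles of length one, as in `nCycles`. -/
abbrev Cycles {ι : Type} (π : Perm ι) : Type := Quotient (SameCycle.setoid π)

variable {ι : Type} [Fintype ι]

section

variable [DecidableEq ι]

instance (π : Perm ι) : DecidableEq π.Cycles :=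
  @Quotient.decidableEq _ _ π.instDecidableRelSameCycle

instance (π : Perm ι) : Fintype π.Cycles :=
  @Quotient.fintype _ _ _ π.instDecidableRelSameCycle

def cycleOrFixedPoint (π : Perm ι) (x : ι) : π.cycleFactorsFinset ⊕ Function.fixedPoints π :=
  if h : π x = x then .inr ⟨x, h⟩
  else .inl ⟨π.cycleOf x, cycleOf_mem_cycleFactorsFinset_iff.2 (mem_support.2 h)⟩

theorem cycleOrFixedPoint_eq_iff (π : Perm ι) (x y : ι) :
    π.cycleOrFixedPoint x = π.cycleOrFixedPoint y ↔ π.SameCycle x y := by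
  unfold cycleOrFixedPoint
  by_cases hx : π x = x <;> by_cases hy : π y = y
  · simp only [dif_pos hx, dif_pos hy, Sum.inr.injEq, Subtype.ext_iff]
    exact ⟨fun h => h ▸ SameCycle.refl π x, fun h => h.eq_of_left hx⟩
  · simp only [dif_pos hx, dif_neg hy, reduceCtorEq, false_iff]
    exact fun h => hy (h.apply_eq_self_iff.1 hx)
  · simp only [dif_neg hx, dif_pos hy, reduceCtorEq, false_iff]
    exact fun h => hx (h.apply_eq_self_iff.2 hy)
  · simp only [dif_neg hx, dif_neg hy, Sum.inl.injEq, Subtype.mk.injEq]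
    exact (sameCycle_iff_cycleOf_eq_of_mem_support (mem_support.2 hx) (mem_support.2 hy)).symm

theorem cycleOrFixedPoint_surjective (π : Perm ι) : Function.Surjective π.cycleOrFixedPoint := by
  rintro (⟨c, hc⟩ | ⟨x, hx⟩)
  · obtain ⟨a, ha⟩ := (mem_cycleFactorsFinset_iff.1 hc).1.nonempty_support
    have ha' : π a ≠ a := mem_support.1 (mem_cycleFactorsFinset_support_le hc ha)
    exact ⟨a, by simp only [cycleOrFixedPoint, dif_neg ha', ← cycle_is_cycleOf ha hc]⟩
  · exact ⟨x, dif_pos hx⟩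

theorem SameCycle.apply_eq_of_invariant {κ : Type*} {π : Perm ι} {f : ι → κ}
    (hf : ∀ i, f (π i) = f i) {a b : ι} (h : π.SameCycle a b) : f a = f b := by
  have hsemiconj : Function.Semiconj f π id := hf
  obtain ⟨n, -, -, rfl⟩ := h.exists_pow_eq π
  rw [coe_pow, hsemiconj.iterate_right n a, Function.iterate_id, id]

def invariantFunEquiv {κ : Type*} (π : Perm ι) :
    {f : ι → κ // ∀ i, f (π i) = f i} ≃ (π.Cycles → κ) where
  toFun f := Quotient.lift f.1 fun _ _ => SameCycle.apply_eq_of_invariant f.2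
  invFun g := ⟨g ∘ Quotient.mk _, fun i =>
    congrArg g (Quotient.sound (sameCycle_apply_left.2 (SameCycle.refl π i)))⟩
  left_inv _ := rfl
  right_inv _ := funext fun q => Quotient.inductionOn q fun _ => rfl

end

variable {κ : Type*} [DecidableEq κ]

def fiberPerm (π : Perm ι) {f : ι → κ} (hf : ∀ i, f (π i) = f i) (j : κ) :
    Perm ↥(univ.filter fun i => f i = j) :=
  π.subtypePerm fun i => by simp only [mem_filter, mem_univ, true_and, hf]

def fiberPreservingEquivPi (f : ι → κ) :
    {π : Perm ι // ∀ i, f (π i) = f i} ≃ ∀ j, Perm ↥(univ.filter fun i => f i = j) :=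
  ((Equiv.subtypeEquiv DomMulAct.mk fun π => by
      rw [DomMulAct.mem_stabilizer_iff]; simp [funext_iff]).trans
    (MulOpposite.opEquiv.trans (DomMulAct.stabilizerMulEquiv f).toEquiv)).trans
    (Equiv.piCongrRight fun j => Equiv.permCongr (Equiv.subtypeEquivRight fun i => by simp))

theorem fiberPreservingEquivPi_apply (f : ι → κ) (π : {π : Perm ι // ∀ i, f (π i) = f i})
    (j : κ) : fiberPreservingEquivPi f π j = fiberPerm π.1 π.2 j := by
  ext; rfl

end Equiv.Perm

open Equiv Perm

section

variable {ι : Type} [Fintype ι] [DecidableEq ι]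

theorem nCycles_eq_card_cycles (π : Perm ι) : nCycles π = Fintype.card π.Cycles := by
  rw [Fintype.card_congr (Quotient.equivOfSurjective _ _ π.cycleOrFixedPoint_eq_iff
      π.cycleOrFixedPoint_surjective), Fintype.card_sum, card_fixedPoints, sum_cycleType,
    Fintype.card_coe, nCycles, cycleType_def, Multiset.card_map]
  rfl

variable {κ : Type*} [DecidableEq κ]

theorem nCycles_fiberPerm (π : Perm ι) {f : ι → κ} (hf : ∀ i, f (π i) = f i) (j : κ) :
    nCycles (fiberPerm π hf j) = #{q | invariantFunEquiv π ⟨f, hf⟩ q = j} := by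
  rw [nCycles_eq_card_cycles, ← Fintype.card_subtype]
  refine Fintype.card_congr (Quotient.equivOfSurjective _
    (fun x => ⟨⟦x.1⟧, (mem_filter.1 x.2).2⟩) (fun x y => ?_) ?_)
  · exact Subtype.ext_iff.trans (Quotient.eq.trans sameCycle_subtypePerm.symm)
  · rintro ⟨q, hq⟩
    induction q using Quotient.ind with
    | _ i => exact ⟨⟨i, mem_filter.2 ⟨mem_univ i, hq⟩⟩, rfl⟩

variable [Fintype κ]

theorem sum_pow_nCycles {R : Type*} [CommSemiring R] (π : Perm ι) (β : κ → R) :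
    (∑ j, β j) ^ nCycles π =
      ∑ f : {f : ι → κ // ∀ i, f (π i) = f i}, ∏ j, β j ^ nCycles (fiberPerm π f.2 j) := by
  calc (∑ j, β j) ^ nCycles π = ∏ _q : π.Cycles, ∑ j, β j := by
        rw [prod_const, card_univ, nCycles_eq_card_cycles]
    _ = ∑ g : π.Cycles → κ, ∏ j, β j ^ #{q | g q = j} := by
        rw [Fintype.prod_sum]
        refine sum_congr rfl fun g _ => ?_
        rw [← prod_fiberwise' univ g β]
        exact prod_congr rfl fun j _ => prod_const _
    _ = _ := (Fintype.sum_equiv (invariantFunEquiv π) _ _ fun f => by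
        simp only [nCycles_fiberPerm]).symm

variable {R : Type} [CommRing R]

theorem sum_fiberPreserving_eq_prod_aperm (f : ι → κ) (β : κ → R) (A : Matrix ι ι R) :
    ∑ π : {π : Perm ι // ∀ i, f (π i) = f i},
        (∏ j, β j ^ nCycles (fiberPerm π.1 π.2 j)) * ∏ i, A i (π.1 i) =
      ∏ j, aperm (β j) (subm A (univ.filter fun i => f i = j)) := by
  simp only [aperm, Fintype.prod_sum]
  refine Fintype.sum_equiv (fiberPreservingEquivPi f) _ _ fun π => ?_
  rw [prod_mul_distrib, ← prod_fiberwise univ f fun i => A i (π.1 i)]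
  simp only [fiberPreservingEquivPi_apply, ← prod_mul_distrib, subm]
  refine prod_congr rfl fun j _ => ?_
  rw [← prod_coe_sort]
  rfl

theorem aperm_sum_eq_sum_prod (β : κ → R) (A : Matrix ι ι R) :
    aperm (∑ j, β j) A =
      ∑ f : ι → κ, ∏ j, aperm (β j) (subm A (univ.filter fun i => f i = j)) := by
  calc aperm (∑ j, β j) A
      = ∑ π : Perm ι, ∑ f : {f : ι → κ // ∀ i, f (π i) = f i},
          (∏ j, β j ^ nCycles (fiberPerm π f.2 j)) * ∏ i, A i (π i) := by
        simp only [aperm, sum_pow_nCycles, sum_mul]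
    _ = ∑ f : ι → κ, ∑ π : {π : Perm ι // ∀ i, f (π i) = f i},
          (∏ j, β j ^ nCycles (fiberPerm π.1 π.2 j)) * ∏ i, A i (π.1 i) :=
        Fintype.sum_subtype_comm (fun (π : Perm ι) (f : ι → κ) => ∀ i, f (π i) = f i)
          fun π _ hf => (∏ j, β j ^ nCycles (fiberPerm π hf j)) * ∏ i, A i (π i)
    _ = _ := sum_congr rfl fun f _ => sum_fiberPreserving_eq_prod_aperm f β A

end

/-- `per_{β₁+⋯+β_m}(A) = Σ Π_j per_{β_j}(A[I_j])` over all ordered partitions of the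
index set into `m` disjoint (possibly empty) subsets, encoded as maps `Fin n → Fin m`. -/
theorem stmt1 (n m : ℕ) (β : Fin m → ℂ) (A : Matrix (Fin n) (Fin n) ℂ) :
    aperm (∑ j, β j) A =
      ∑ f : Fin n → Fin m,
        ∏ j, aperm (β j) (subm A (Finset.univ.filter fun i => f i = j)) :=
  aperm_sum_eq_sum_prod β A
end

section
/- If A and D are positive semi-definite Hermitian n×n matrices where D is obtained from A by replacing the off-diagonal blocks with zero (A = [[A',B],[B*,A'']], D = [[A',0],[0,A'']]), then for every k, per(A,k) ≥ per(D,k), where per(M,k) = Σ_{(I_1,…,I_k)} Π_j per(M[I_j]) over ordered partitions of {1,…,n} into k nonempty subsets. -/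
open Finset Matrix
open scoped ComplexOrder

/-!
Lieb's inequality `per [[A, B], [Bᴴ, D]] ≥ per [[A, 0], [0, D]]` for positive semidefinite `A`
and `D`, applied to every principal submatrix. Laplace expansion along the row blocks and then
the column blocks writes `per [[A, B], [Bᴴ, D]]` as the Hermitian form `Σ c_p K_{pq} conj c_q`
with `c_{(S, W)} = per B[Sᶜ, W]` and `K = P(A) ⊗ P(D)ᵀ`, where `P(M)_{X,Y} = per M[X, Y]` is the
permanental compound. By the Cauchy–Binet formula for permanents, `P(GᴴG)` is a sum of Gram
matrices, so `K` is positive semidefinite. For `B = 0` the vector `c` is supported on `S = univ`,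
and `K` does not couple `S = univ` with smaller `S`, since permanents of non-square blocks vanish;
so adding `B` only adds a nonnegative term.
-/

namespace Finset

variable {β₁ β₂ : Type*}

def toLeftSumToRightEquiv (T : Finset (β₁ ⊕ β₂)) : ↥T.toLeft ⊕ ↥T.toRight ≃ ↥T :=
  (Equiv.sumCongr (Equiv.subtypeEquivRight fun _ => mem_toLeft)
    (Equiv.subtypeEquivRight fun _ => mem_toRight)).trans Equiv.subtypeSum.symm

variable [Fintype β₁] [Fintype β₂] [DecidableEq β₁] [DecidableEq β₂]

theorem toLeft_compl (T : Finset (β₁ ⊕ β₂)) : Tᶜ.toLeft = T.toLeftᶜ := by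
  ext; simp

theorem toRight_compl (T : Finset (β₁ ⊕ β₂)) : Tᶜ.toRight = T.toRightᶜ := by
  ext; simp

end Finset

namespace Matrix

variable {α β : Type*} [Fintype α] [Fintype β] [DecidableEq α] [DecidableEq β]
  {R : Type*} [CommSemiring R] {𝕜 : Type*} [RCLike 𝕜]

def bijPerm (M : Matrix α β R) : R :=
  ∑ e : α ≃ β, ∏ a, M a (e a)

theorem bijPerm_eq_zero_of_card_ne {M : Matrix α β R} (h : Fintype.card α ≠ Fintype.card β) :
    bijPerm M = 0 := by
  have : IsEmpty (α ≃ β) := ⟨fun e => h (Fintype.card_congr e)⟩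
  simp [bijPerm]

theorem bijPerm_eq_zero_of_row {M : Matrix α β R} {a : α} (h : ∀ b, M a b = 0) :
    bijPerm M = 0 :=
  Finset.sum_eq_zero fun _ _ => Finset.prod_eq_zero (Finset.mem_univ a) (h _)

theorem bijPerm_submatrix_equiv {α' β' : Type*} [Fintype α'] [Fintype β'] [DecidableEq α']
    [DecidableEq β'] (M : Matrix α β R) (e : α' ≃ α) (f : β' ≃ β) :
    bijPerm (M.submatrix e f) = bijPerm M :=
  Fintype.sum_equiv (e.equivCongr f) _ _ fun σ => by
    simpa using Equiv.prod_comp e fun a => M a (e.equivCongr f σ a)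

theorem bijPerm_transpose (M : Matrix α β R) : bijPerm Mᵀ = bijPerm M :=
  Fintype.sum_equiv (Equiv.symmEquiv β α) _ _ fun σ =>
    (Equiv.prod_comp σ.symm fun b => M (σ b) b).symm.trans <| by simp

theorem bijPerm_conjTranspose (M : Matrix α β 𝕜) : bijPerm Mᴴ = star (bijPerm M) := by
  rw [show Mᴴ = (M.map star)ᵀ from rfl, bijPerm_transpose]
  simp [bijPerm, star_sum, star_prod]

section Laplace

variable {α₁ α₂ : Type*} [Fintype α₁] [Fintype α₂] [DecidableEq α₁] [DecidableEq α₂]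

def glueEquiv (T : Finset β) (e₁ : α₁ ≃ T) (e₂ : α₂ ≃ ↥Tᶜ) : α₁ ⊕ α₂ ≃ β :=
  (Equiv.sumCongr e₁ (e₂.trans (Equiv.subtypeEquivRight fun _ => Finset.mem_compl))).trans
    (Equiv.sumCompl (· ∈ T))

omit [Fintype α₁] [Fintype α₂] [DecidableEq α₁] [DecidableEq α₂] in
theorem subset_of_glueEquiv_eq {T T' : Finset β} {e₁ : α₁ ≃ T} {e₂ : α₂ ≃ ↥Tᶜ}
    {e₁' : α₁ ≃ T'} {e₂' : α₂ ≃ ↥T'ᶜ} (h : glueEquiv T e₁ e₂ = glueEquiv T' e₁' e₂') :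
    T ⊆ T' := by
  intro b hb
  have hb' : glueEquiv T e₁ e₂ (Sum.inl (e₁.symm ⟨b, hb⟩)) = b := by simp [glueEquiv]
  rw [h] at hb'
  exact hb' ▸ (e₁' _).2

omit [Fintype α₁] [Fintype α₂] [DecidableEq α₁] [DecidableEq α₂] in
theorem glueEquiv_bijective :
    Function.Bijective fun x : Σ T : Finset β, (α₁ ≃ T) × (α₂ ≃ ↥Tᶜ) =>
      glueEquiv x.1 x.2.1 x.2.2 := by
  constructor
  · rintro ⟨T, e₁, e₂⟩ ⟨T', e₁', e₂'⟩ h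
    obtain rfl : T = T' := (subset_of_glueEquiv_eq h).antisymm (subset_of_glueEquiv_eq h.symm)
    have h' : ∀ c, glueEquiv T e₁ e₂ c = glueEquiv T e₁' e₂' c := fun c => congrArg (· c) h
    obtain rfl : e₁ = e₁' := Equiv.ext fun a => Subtype.ext (h' (Sum.inl a))
    obtain rfl : e₂ = e₂' := Equiv.ext fun b => Subtype.ext (h' (Sum.inr b))
    rfl
  · intro e
    let T := univ.filter fun b => (e.symm b).isLeft
    let e₁ : α₁ ≃ T := Equiv.ofBijective (fun a => ⟨e (.inl a), by simp [T]⟩)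
      ⟨fun a a' h => Sum.inl_injective (e.injective (congrArg Subtype.val h)), by
        rintro ⟨b, hb⟩
        obtain ⟨a, ha⟩ := Sum.isLeft_iff.mp (Finset.mem_filter.mp hb).2
        exact ⟨a, Subtype.ext (by simp [← ha])⟩⟩
    let e₂ : α₂ ≃ ↥Tᶜ := Equiv.ofBijective (fun a => ⟨e (.inr a), by simp [T]⟩)
      ⟨fun a a' h => Sum.inr_injective (e.injective (congrArg Subtype.val h)), by
        rintro ⟨b, hb⟩
        obtain ⟨a, ha⟩ := Sum.isRight_iff.mp (by simpa [T] using hb)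
        exact ⟨a, Subtype.ext (by simp [← ha])⟩⟩
    exact ⟨⟨T, e₁, e₂⟩, Equiv.ext (by rintro (a | a) <;> rfl)⟩

theorem bijPerm_eq_sum_rows (M : Matrix (α₁ ⊕ α₂) β R) :
    bijPerm M = ∑ T : Finset β, bijPerm (M.submatrix Sum.inl ((↑) : T → β)) *
      bijPerm (M.submatrix Sum.inr ((↑) : ↥Tᶜ → β)) := by
  calc bijPerm M
      = ∑ x : Σ T : Finset β, (α₁ ≃ T) × (α₂ ≃ ↥Tᶜ), ∏ c, M c (glueEquiv x.1 x.2.1 x.2.2 c) :=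
        (Fintype.sum_bijective _ glueEquiv_bijective _ _ fun _ => rfl).symm
    _ = ∑ T : Finset β, ∑ x : (α₁ ≃ T) × (α₂ ≃ ↥Tᶜ),
          (∏ a, M (.inl a) (x.1 a)) * ∏ b, M (.inr b) (x.2 b) := by
        rw [Fintype.sum_sigma]
        simp only [Fintype.prod_sum_type]
        rfl
    _ = _ := Finset.sum_congr rfl fun T _ => by
        rw [bijPerm, bijPerm, Finset.sum_mul_sum, ← Finset.univ_product_univ, Finset.sum_product]
        rfl

theorem bijPerm_eq_sum_cols (M : Matrix α (α₁ ⊕ α₂) R) :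
    bijPerm M = ∑ S : Finset α, bijPerm (M.submatrix ((↑) : S → α) Sum.inl) *
      bijPerm (M.submatrix ((↑) : ↥Sᶜ → α) Sum.inr) := by
  rw [← bijPerm_transpose, bijPerm_eq_sum_rows]
  exact Finset.sum_congr rfl fun S _ => by
    rw [← bijPerm_transpose (M.submatrix _ Sum.inl), ← bijPerm_transpose (M.submatrix _ Sum.inr)]
    rfl

end Laplace

section CauchyBinet

variable {κ ρ : Type*} [Fintype κ] [Fintype ρ] [DecidableEq ρ]

omit [Fintype β] [DecidableEq β] in
theorem sum_prod_mul_prod_eq_prod_mul (P : Matrix α κ R) (Q : Matrix κ β R) (σ : α ≃ ρ)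
    (τ : ρ ≃ β) :
    ∑ φ : ρ → κ, (∏ a, P a (φ (σ a))) * ∏ t, Q (φ t) (τ t) = ∏ a, (P * Q) a (τ (σ a)) := by
  calc ∑ φ : ρ → κ, (∏ a, P a (φ (σ a))) * ∏ t, Q (φ t) (τ t)
      = ∑ ψ : α → κ, ∏ a, P a (ψ a) * Q (ψ a) (τ (σ a)) := by
        refine Fintype.sum_equiv (σ.arrowCongr (Equiv.refl κ)).symm _ _ fun φ => ?_
        rw [← Equiv.prod_comp σ (fun t => Q (φ t) (τ t)), ← Finset.prod_mul_distrib]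
        simp
    _ = ∏ a, (P * Q) a (τ (σ a)) := by
        simp_rw [mul_apply]
        exact (Fintype.prod_sum fun a k => P a k * Q k (τ (σ a))).symm

theorem factorial_mul_bijPerm_mul (P : Matrix α κ R) (Q : Matrix κ β R)
    (h : Fintype.card ρ = Fintype.card α) :
    (Fintype.card α).factorial * bijPerm (P * Q) =
      ∑ φ : ρ → κ, bijPerm (P.submatrix id φ) * bijPerm (Q.submatrix φ id) := by
  have hcard : Fintype.card (α ≃ ρ) = (Fintype.card α).factorial :=
    Fintype.card_equiv (Fintype.equivOfCardEq h.symm)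
  simp_rw [bijPerm, Finset.sum_mul_sum]
  rw [Finset.sum_comm]
  simp_rw [Finset.sum_comm (s := Finset.univ (α := ρ → κ)), submatrix_apply, id,
    sum_prod_mul_prod_eq_prod_mul]
  rw [← hcard, ← nsmul_eq_mul, ← Finset.card_univ, ← Finset.sum_const]
  exact Finset.sum_congr rfl fun σ _ =>
    (Fintype.sum_equiv (Equiv.equivCongr σ (Equiv.refl β)).symm _ _ fun τ => by simp).symm

end CauchyBinet

section Compound

def permCompound (M : Matrix α β R) : Matrix (Finset α) (Finset β) R :=
  of fun S T => bijPerm (M.submatrix ((↑) : S → α) ((↑) : T → β))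

omit [Fintype α] [Fintype β] in
theorem permCompound_conjTranspose (M : Matrix α β 𝕜) :
    permCompound Mᴴ = (permCompound M)ᴴ := by
  ext X Y
  rw [conjTranspose_apply, permCompound, permCompound, of_apply, of_apply,
    ← bijPerm_conjTranspose, conjTranspose_submatrix]

variable {β₁ β₂ : Type*} [Fintype β₁] [Fintype β₂] [DecidableEq β₁] [DecidableEq β₂]

omit [Fintype β₁] [Fintype β₂] in
theorem bijPerm_submatrix_finset_sum (M : Matrix α (β₁ ⊕ β₂) R) (T : Finset (β₁ ⊕ β₂)) :
    bijPerm (M.submatrix id ((↑) : T → β₁ ⊕ β₂)) = ∑ S : Finset α,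
      permCompound (M.submatrix id Sum.inl) S T.toLeft *
        permCompound (M.submatrix id Sum.inr) Sᶜ T.toRight := by
  rw [← bijPerm_submatrix_equiv _ (Equiv.refl α) T.toLeftSumToRightEquiv, bijPerm_eq_sum_cols]
  rfl

theorem bijPerm_fromBlocks (A : Matrix β₁ β₁ R) (B : Matrix β₁ β₂ R) (C : Matrix β₂ β₁ R)
    (D : Matrix β₂ β₂ R) :
    bijPerm (fromBlocks A B C D) = ∑ V : Finset β₁, ∑ W : Finset β₂,
      (∑ S, permCompound A S V * permCompound B Sᶜ W) *
        ∑ U, permCompound C U Vᶜ * permCompound D Uᶜ Wᶜ := by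
  rw [bijPerm_eq_sum_rows, ← Fintype.sum_prod_type', ← Finset.sumEquiv.toEquiv.sum_comp]
  refine Fintype.sum_congr _ _ fun T => ?_
  rw [OrderIso.coe_toEquiv, Finset.sumEquiv_apply_fst, Finset.sumEquiv_apply_snd,
    ← Finset.toLeft_compl, ← Finset.toRight_compl]
  exact congr_arg₂ (· * ·)
    (bijPerm_submatrix_finset_sum ((fromBlocks A B C D).submatrix Sum.inl id) T)
    (bijPerm_submatrix_finset_sum ((fromBlocks A B C D).submatrix Sum.inr id) Tᶜ)

def permMinors {κ : Type*} (G : Matrix κ α R) (m : ℕ) : Matrix (Fin m → κ) (Finset α) R :=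
  of fun φ X => bijPerm (G.submatrix φ ((↑) : X → α))

theorem conjTranspose_permMinors_mul_self_apply (G : Matrix α α 𝕜) (m : ℕ) (X Y : Finset α) :
    ((permMinors G m)ᴴ * permMinors G m) X Y =
      if X.card = m then (m.factorial : 𝕜) * permCompound (Gᴴ * G) X Y else 0 := by
  simp only [mul_apply, conjTranspose_apply, permMinors, of_apply]
  split_ifs with hX
  · subst hX
    have := factorial_mul_bijPerm_mul (Gᴴ.submatrix ((↑) : X → α) id) (G.submatrix id ((↑) : Y → α))
      (ρ := Fin X.card) (by simp)
    rw [← submatrix_mul _ _ _ _ _ Function.bijective_id] at this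
    simp only [Fintype.card_coe] at this
    rw [permCompound, of_apply, this]
    refine Finset.sum_congr rfl fun φ _ => ?_
    rw [← bijPerm_conjTranspose, conjTranspose_submatrix]
    rfl
  · refine Finset.sum_eq_zero fun φ _ => ?_
    rw [bijPerm_eq_zero_of_card_ne (by simpa [eq_comm] using hX), star_zero, zero_mul]

theorem permCompound_conjTranspose_mul_self (G : Matrix α α 𝕜) :
    permCompound (Gᴴ * G) = ∑ m ∈ Finset.range (Fintype.card α + 1),
      ((m.factorial : ℝ)⁻¹) • ((permMinors G m)ᴴ * permMinors G m) := by
  ext X Y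
  simp only [sum_apply, smul_apply, conjTranspose_permMinors_mul_self_apply]
  rw [Finset.sum_eq_single X.card (fun m _ hm => by simp [Ne.symm hm]) (fun h => absurd
    (Finset.mem_range_succ_iff.mpr (X.card_le_univ)) h), if_pos rfl, RCLike.real_smul_eq_coe_mul]
  push_cast
  rw [inv_mul_cancel_left₀ (by exact_mod_cast X.card.factorial_ne_zero)]

open scoped MatrixOrder in
theorem PosSemidef.permCompound {M : Matrix α α 𝕜} (hM : M.PosSemidef) :
    (permCompound M).PosSemidef := by
  obtain ⟨G, rfl⟩ := CStarAlgebra.nonneg_iff_eq_star_mul_self.mp hM.nonneg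
  rw [star_eq_conjTranspose, permCompound_conjTranspose_mul_self]
  exact posSemidef_sum _ fun m _ =>
    (posSemidef_conjTranspose_mul_self _).smul (by positivity)

theorem PosSemidef.bijPerm_nonneg {M : Matrix α α 𝕜} (hM : M.PosSemidef) : 0 ≤ bijPerm M :=
  calc 0 ≤ Matrix.permCompound M univ univ := hM.permCompound.diag_nonneg
    _ = bijPerm M := bijPerm_submatrix_equiv M (Equiv.subtypeUnivEquiv Finset.mem_univ)
        (Equiv.subtypeUnivEquiv Finset.mem_univ)

end Compound

omit [DecidableEq α] in
theorem star_dotProduct_mulVec_eq_zero {K : Matrix α α 𝕜} {x y : α → 𝕜}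
    (h : ∀ i j, x i ≠ 0 → y j ≠ 0 → K i j = 0) : star x ⬝ᵥ (K *ᵥ y) = 0 := by
  simp only [dotProduct, mulVec, Finset.mul_sum]
  refine Finset.sum_eq_zero fun i _ => Finset.sum_eq_zero fun j _ => ?_
  by_cases hx : x i = 0
  · simp [hx]
  by_cases hy : y j = 0
  · simp [hy]
  simp [h i j hx hy]

omit [DecidableEq α] in
theorem PosSemidef.star_dotProduct_mulVec_le_add {K : Matrix α α 𝕜} (hK : K.PosSemidef)
    {x y : α → 𝕜} (h : ∀ i j, x i ≠ 0 → y j ≠ 0 → K i j = 0) :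
    star x ⬝ᵥ (K *ᵥ x) ≤ star (x + y) ⬝ᵥ (K *ᵥ (x + y)) := by
  have hxy := star_dotProduct_mulVec_eq_zero h
  have hyx : star y ⬝ᵥ (K *ᵥ x) = 0 := star_dotProduct_mulVec_eq_zero fun j i hy hx => by
    rw [← hK.isHermitian.apply, h i j hx hy, star_zero]
  simp only [star_add, mulVec_add, add_dotProduct, dotProduct_add, hxy, hyx, add_zero, zero_add]
  exact le_add_of_nonneg_right (hK.dotProduct_mulVec_nonneg y)

section Lieb

open scoped Kronecker

variable {ι₁ ι₂ : Type*} [Fintype ι₁] [Fintype ι₂] [DecidableEq ι₁] [DecidableEq ι₂]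

theorem bijPerm_fromBlocks_conjTranspose (A : Matrix ι₁ ι₁ 𝕜) (B : Matrix ι₁ ι₂ 𝕜)
    (D : Matrix ι₂ ι₂ 𝕜) :
    bijPerm (fromBlocks A B Bᴴ D) =
      star (fun p => star (permCompound B p.1ᶜ p.2)) ⬝ᵥ
        ((permCompound A ⊗ₖ (permCompound D)ᵀ.submatrix (·ᶜ) (·ᶜ)) *ᵥ
          fun p : Finset ι₁ × Finset ι₂ => star (permCompound B p.1ᶜ p.2)) := by
  rw [bijPerm_fromBlocks, permCompound_conjTranspose]
  simp only [dotProduct, mulVec, Fintype.sum_prod_type, Finset.mul_sum, Finset.sum_mul,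
    kronecker_apply, Pi.star_apply, star_star, conjTranspose_apply, transpose_apply,
    submatrix_apply]
  rw [Finset.sum_comm]
  conv_rhs => rw [Finset.sum_comm]
  refine Finset.sum_congr rfl fun W _ => ?_
  conv_rhs => rw [Finset.sum_comm]
  refine Finset.sum_congr rfl fun V _ => ?_
  conv_rhs => rw [Finset.sum_comm]
  exact Finset.sum_congr rfl fun U _ => Finset.sum_congr rfl fun S _ => by ring

theorem bijPerm_fromBlocks_zero_le {A : Matrix ι₁ ι₁ 𝕜} {D : Matrix ι₂ ι₂ 𝕜}
    (hA : A.PosSemidef) (hD : D.PosSemidef) (B : Matrix ι₁ ι₂ 𝕜) :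
    bijPerm (fromBlocks A 0 0 D) ≤ bijPerm (fromBlocks A B Bᴴ D) := by
  have hK := hA.permCompound.kronecker (hD.permCompound.transpose.submatrix (·ᶜ))
  have h0 := bijPerm_fromBlocks_conjTranspose A 0 D
  rw [conjTranspose_zero] at h0
  rw [h0, bijPerm_fromBlocks_conjTranspose, ← add_sub_cancel
    (fun p : Finset ι₁ × Finset ι₂ => star (permCompound (0 : Matrix ι₁ ι₂ 𝕜) p.1ᶜ p.2))
    (fun p => star (permCompound B p.1ᶜ p.2))]
  refine hK.star_dotProduct_mulVec_le_add fun p q hp hq => ?_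
  have hp₁ : p.1 = univ := by
    by_contra h
    obtain ⟨i, hi⟩ : ∃ i, i ∉ p.1 := by simpa [Finset.eq_univ_iff_forall] using h
    exact hp (by rw [permCompound, of_apply,
      bijPerm_eq_zero_of_row (a := ⟨i, Finset.mem_compl.2 hi⟩) fun _ => rfl, star_zero])
  have hq₁ : q.1 ≠ univ := by
    rintro h
    have hB : B.submatrix ((↑) : ↥q.1ᶜ → ι₁) ((↑) : q.2 → ι₂) = 0 := by
      ext ⟨i, hi⟩ j
      simp [h] at hi
    exact hq (by simp [permCompound, hB])
  rw [kronecker_apply, permCompound, of_apply, bijPerm_eq_zero_of_card_ne, zero_mul]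
  rw [Fintype.card_coe, Fintype.card_coe, hp₁, Finset.card_univ]
  exact ((Finset.card_lt_iff_ne_univ _).mpr hq₁).ne'

end Lieb

section Principal

variable {ι₁ ι₂ : Type} [DecidableEq ι₁] [DecidableEq ι₂]

theorem perm_subm_fromBlocks {R' : Type} [CommRing R'] (A : Matrix ι₁ ι₁ R')
    (B : Matrix ι₁ ι₂ R') (C : Matrix ι₂ ι₁ R') (D : Matrix ι₂ ι₂ R') (I : Finset (ι₁ ⊕ ι₂)) :
    perm (subm (fromBlocks A B C D) I) =
      bijPerm (fromBlocks (A.submatrix ((↑) : I.toLeft → ι₁) (↑))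
        (B.submatrix ((↑) : I.toLeft → ι₁) ((↑) : I.toRight → ι₂))
        (C.submatrix ((↑) : I.toRight → ι₂) ((↑) : I.toLeft → ι₁))
        (D.submatrix ((↑) : I.toRight → ι₂) (↑))) := by
  change bijPerm _ = _
  rw [← bijPerm_submatrix_equiv _ I.toLeftSumToRightEquiv I.toLeftSumToRightEquiv]
  congr 1
  ext (i | i) (j | j) <;> rfl

theorem perm_subm_fromBlocks_zero_le {A : Matrix ι₁ ι₁ ℂ} {D : Matrix ι₂ ι₂ ℂ}
    (hA : A.PosSemidef) (hD : D.PosSemidef) (B : Matrix ι₁ ι₂ ℂ) (I : Finset (ι₁ ⊕ ι₂)) :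
    perm (subm (fromBlocks A 0 0 D) I) ≤ perm (subm (fromBlocks A B Bᴴ D) I) := by
  rw [perm_subm_fromBlocks, perm_subm_fromBlocks, submatrix_zero, submatrix_zero,
    ← conjTranspose_submatrix]
  exact bijPerm_fromBlocks_zero_le (hA.submatrix _) (hD.submatrix _) _

end Principal

end Matrix

theorem stmt11_general (m l k : ℕ)
    (A' : Matrix (Fin m) (Fin m) ℂ) (B : Matrix (Fin m) (Fin l) ℂ)
    (A'' : Matrix (Fin l) (Fin l) ℂ)
    (hD : (Matrix.fromBlocks A' 0 0 A'').PosSemidef) :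
    (permPart (Matrix.fromBlocks A' B Bᴴ A'') k).re ≥
      (permPart (Matrix.fromBlocks A' 0 0 A'') k).re := by
  have hA' : A'.PosSemidef := hD.submatrix Sum.inl
  have hA'' : A''.PosSemidef := hD.submatrix Sum.inr
  have h : permPart (fromBlocks A' 0 0 A'') k ≤ permPart (fromBlocks A' B Bᴴ A'') k :=
    Finset.sum_le_sum fun f _ => Finset.prod_le_prod
      (fun _ _ => PosSemidef.bijPerm_nonneg (hD.submatrix Subtype.val))
      (fun _ _ => perm_subm_fromBlocks_zero_le hA' hA'' B _)
  exact (Complex.le_def.mp h).1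

/-- `per(A, k) ≥ per(D, k)` where `D` is obtained from the p.s.d. Hermitian block
matrix `A = [[A', B], [Bᴴ, A'']]` by zeroing the off-diagonal blocks. -/
theorem stmt11 (m l k : ℕ)
    (A' : Matrix (Fin m) (Fin m) ℂ) (B : Matrix (Fin m) (Fin l) ℂ)
    (A'' : Matrix (Fin l) (Fin l) ℂ)
    (hA : (Matrix.fromBlocks A' B Bᴴ A'').PosSemidef)
    (hD : (Matrix.fromBlocks A' 0 0 A'').PosSemidef) :
    (permPart (Matrix.fromBlocks A' B Bᴴ A'') k).re ≥
      (permPart (Matrix.fromBlocks A' 0 0 A'') k).re :=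
  stmt11_general m l k A' B A'' hD
end

section
/- If A and D are positive semi-definite Hermitian n×n matrices where D is obtained from A by zeroing the off-diagonal blocks (A = [[A',B],[B*,A'']], D = [[A',0],[0,A'']]), then for every k, det(A,k) ≤ det(D,k), where det(M,k) = Σ_{(I_1,…,I_k)} Π_j det(M[I_j]) over ordered partitions of {1,…,n} into k nonempty subsets. -/
open Finset Matrix
open scoped ComplexOrder

/-!
Each principal submatrix `A[I]` of `A` is positive semidefinite, and `D[I]` is the block-diagonal
part of `A[I]` for the splitting of `I` into indices of the two blocks. Fischer's inequality thus
gives `0 ≤ det A[I] ≤ det D[I]` for every `I`, and `det(A, k) ≤ det(D, k)` follows termwise.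

Fischer's inequality comes from the Schur complement: for `P` invertible,
`det [[P, Q], [Qᴴ, S]] = det P * det (S - Qᴴ P⁻¹ Q) ≤ det P * det S`,
because `det` is monotone on positive semidefinite matrices:
`det (X + Y) = det X * det (1 + X^{-1/2} Y X^{-1/2}) ≥ det X`.
If `P` is singular, the block matrix is not positive definite either, so its determinant is `0`.
-/

namespace Matrix.PosSemidef

variable {𝕜 ι : Type*} [RCLike 𝕜] [Fintype ι] [DecidableEq ι]

theorem one_le_det_one_add {Z : Matrix ι ι 𝕜} (hZ : Z.PosSemidef) : 1 ≤ (1 + Z).det := by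
  have hZ' : IsSelfAdjoint Z := hZ.1
  have hcfc : 1 + Z = cfc (fun x : ℝ => 1 + x) Z := by
    rw [cfc_add Z (fun _ => 1) (fun x => x), cfc_const_one ℝ Z hZ', cfc_id' ℝ Z hZ']
  rw [hcfc, hZ.1.cfc_eq]
  simp only [IsHermitian.cfc, det_map, det_diagonal, Function.comp_apply, map_add, map_one]
  exact one_le_prod fun i _ =>
    le_add_of_nonneg_right (RCLike.ofReal_nonneg.2 (hZ.eigenvalues_nonneg i))

theorem det_le_det_add {X Y : Matrix ι ι 𝕜} (hX : X.PosSemidef) (hY : Y.PosSemidef) :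
    X.det ≤ (X + Y).det := by
  by_cases hdX : X.det = 0
  · rw [hdX]; exact (hX.add hY).det_nonneg
  open scoped MatrixOrder in
  set R := CFC.sqrt X
  have hR : R.PosSemidef := (CFC.sqrt_nonneg X).posSemidef
  have hRR : R * R = X := CFC.sqrt_mul_sqrt_self X hX.nonneg
  have hdR : IsUnit R.det := by
    rw [isUnit_iff_ne_zero]
    intro h
    exact hdX (by rw [← hRR, det_mul, h, mul_zero])
  have hZ : (R⁻¹ * Y * R⁻¹).PosSemidef := by
    have := hY.mul_mul_conjTranspose_same R⁻¹
    rwa [hR.1.inv] at this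
  have key : X + Y = R * (1 + R⁻¹ * Y * R⁻¹) * R := by
    rw [mul_add, mul_one, add_mul, hRR]
    congr 1
    have : R * (R⁻¹ * Y * R⁻¹) * R = R * R⁻¹ * Y * (R⁻¹ * R) := by
      simp only [mul_assoc]
    rw [this, Matrix.mul_nonsing_inv _ hdR, Matrix.nonsing_inv_mul _ hdR, one_mul, mul_one]
  calc X.det = R.det * R.det * 1 := by rw [mul_one, ← det_mul, hRR]
    _ ≤ R.det * R.det * (1 + R⁻¹ * Y * R⁻¹).det :=
        mul_le_mul_of_nonneg_left hZ.one_le_det_one_add (mul_nonneg hR.det_nonneg hR.det_nonneg)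
    _ = (X + Y).det := by rw [key, det_mul, det_mul]; ring

theorem det_fromBlocks_le {m n : Type*} [Fintype m] [Fintype n] [DecidableEq m] [DecidableEq n]
    {A : Matrix m m 𝕜} {B : Matrix m n 𝕜} {D : Matrix n n 𝕜}
    (h : (fromBlocks A B Bᴴ D).PosSemidef) :
    (fromBlocks A B Bᴴ D).det ≤ A.det * D.det := by
  have hA : A.PosSemidef := h.submatrix Sum.inl
  by_cases hdA : A.det = 0
  · have hdet : (fromBlocks A B Bᴴ D).det = 0 := by
      by_contra hne
      have hApd : A.PosDef := ((h.posDef_iff_det_ne_zero).2 hne).submatrix Sum.inl_injective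
      exact hApd.det_pos.ne' hdA
    rw [hdet, hdA, zero_mul]
  · have hApd : A.PosDef := (hA.posDef_iff_det_ne_zero).2 hdA
    have : Invertible A := hApd.isUnit.invertible
    have hS : (D - Bᴴ * A⁻¹ * B).PosSemidef := (PosDef.fromBlocks₁₁ B D hApd).mp h
    have hT : (Bᴴ * A⁻¹ * B).PosSemidef := hApd.inv.posSemidef.conjTranspose_mul_mul_same B
    rw [det_fromBlocks₁₁, invOf_eq_nonsing_inv]
    gcongr
    · exact hA.det_nonneg
    · simpa using hS.det_le_det_add hT

theorem det_le_det_toSquareBlockProp_mul_det {M : Matrix ι ι 𝕜} (hM : M.PosSemidef)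
    (p : ι → Prop) [DecidablePred p] :
    M.det ≤ (M.toSquareBlockProp p).det * (M.toSquareBlockProp fun i => ¬p i).det := by
  have hB : toBlock M (fun i => ¬p i) p = (toBlock M p fun i => ¬p i)ᴴ := by
    ext i j
    exact (hM.1.apply i j).symm
  have hsum : M.submatrix (Equiv.sumCompl p) (Equiv.sumCompl p) =
      fromBlocks (toBlock M p p) (toBlock M p fun i => ¬p i) (toBlock M (fun i => ¬p i) p)
        (toBlock M (fun i => ¬p i) fun i => ¬p i) := by
    ext (i | i) (j | j) <;> rfl
  rw [det_toBlock M p, hB]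
  exact det_fromBlocks_le (hB ▸ hsum ▸ hM.submatrix _)

end Matrix.PosSemidef

theorem det_subm_fromBlocks_le_det_subm_fromBlocks_zero {𝕜 m n : Type} [RCLike 𝕜]
    [Fintype m] [Fintype n] [DecidableEq m] [DecidableEq n]
    {A : Matrix m m 𝕜} {B : Matrix m n 𝕜} {D : Matrix n n 𝕜}
    (h : (fromBlocks A B Bᴴ D).PosSemidef) (I : Finset (m ⊕ n)) :
    (subm (fromBlocks A B Bᴴ D) I).det ≤ (subm (fromBlocks A 0 0 D) I).det := by
  set M := subm (fromBlocks A B Bᴴ D) I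
  set N := subm (fromBlocks A 0 0 D) I
  let p : I → Prop := fun i => (i : m ⊕ n).isLeft
  calc M.det ≤ (M.toSquareBlockProp p).det * (M.toSquareBlockProp fun i => ¬p i).det :=
        (h.submatrix _).det_le_det_toSquareBlockProp_mul_det p
    _ = (N.toSquareBlockProp p).det * (N.toSquareBlockProp fun i => ¬p i).det := by
        congr 2 <;> ext ⟨⟨i | i, _⟩, hi⟩ ⟨⟨j | j, _⟩, hj⟩ <;>
          first | rfl | simp [p] at hi hj
    _ = N.det := by
        refine (twoBlockTriangular_det N p ?_).symm
        rintro ⟨i | i, _⟩ hi ⟨j | j, _⟩ hj <;> first | rfl | simp [p] at hi hj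

theorem detPart_le_detPart {ι R : Type} [Fintype ι] [DecidableEq ι] [CommRing R] [PartialOrder R]
    [IsOrderedRing R] {M N : Matrix ι ι R} (h₀ : ∀ I, 0 ≤ (subm M I).det)
    (hle : ∀ I, (subm M I).det ≤ (subm N I).det) (k : ℕ) :
    detPart M k ≤ detPart N k :=
  sum_le_sum fun _ _ => prod_le_prod (fun _ _ => h₀ _) fun _ _ => hle _

theorem stmt12_general (m l k : ℕ)
    (A' : Matrix (Fin m) (Fin m) ℂ) (B : Matrix (Fin m) (Fin l) ℂ)
    (A'' : Matrix (Fin l) (Fin l) ℂ)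
    (hA : (Matrix.fromBlocks A' B Bᴴ A'').PosSemidef) :
    (detPart (Matrix.fromBlocks A' B Bᴴ A'') k).re ≤
      (detPart (Matrix.fromBlocks A' 0 0 A'') k).re :=
  (Complex.le_def.mp (detPart_le_detPart (fun _ => (hA.submatrix Subtype.val).det_nonneg)
    (det_subm_fromBlocks_le_det_subm_fromBlocks_zero hA) k)).1

/-- `det(A, k) ≤ det(D, k)` where `D` is obtained from the p.s.d. Hermitian block
matrix `A = [[A', B], [Bᴴ, A'']]` by zeroing the off-diagonal blocks. -/
theorem stmt12 (m l k : ℕ)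
    (A' : Matrix (Fin m) (Fin m) ℂ) (B : Matrix (Fin m) (Fin l) ℂ)
    (A'' : Matrix (Fin l) (Fin l) ℂ)
    (hA : (Matrix.fromBlocks A' B Bᴴ A'').PosSemidef)
    (hD : (Matrix.fromBlocks A' 0 0 A'').PosSemidef) :
    (detPart (Matrix.fromBlocks A' B Bᴴ A'') k).re ≤
      (detPart (Matrix.fromBlocks A' 0 0 A'') k).re :=
  stmt12_general m l k A' B A'' hA
end

section
/- If A is a positive semi-definite Hermitian n×n matrix and α is a nonnegative integer, then per_α(A) ≥ 0 and (−1)^n per_{−α}(A) ≥ 0. -/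
open Finset Matrix
open scoped ComplexOrder

/-!
Write `m ^ ν(π)` as the number of colourings `f : ι → Fin m` that are constant on the cycles
of `π`, i.e. with `f ∘ π = f`. Exchanging the sums, `per_m A` and `(-1) ^ n per_{-m} A` become sums
over `f` of `∑_{π ∈ G_f} ε(π) ∏ᵢ A i (π i)`, where `G_f` is the group of permutations preserving
the fibres of `f` and `ε` is the trivial character or the sign. Each such sum is nonnegative:
multiplied by `|G_f|` it is the quadratic form `ε* M ε` of the matrix
`M σ τ = ∏ᵢ A (σ i) (τ i)` on `G_f`, which is positive semidefinite by the Schur product theorem.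
-/

open Equiv

namespace Matrix.PosSemidef

variable {𝕜 n : Type*} [RCLike 𝕜] [Fintype n]

theorem prod_hadamard {κ : Type*} (s : Finset κ) {M : κ → Matrix n n 𝕜}
    (hM : ∀ k ∈ s, (M k).PosSemidef) : (of fun x y => ∏ k ∈ s, M k x y).PosSemidef := by
  classical
  induction s using Finset.induction_on with
  | empty => simpa [vecMulVec] using posSemidef_vecMulVec_self_star (1 : n → 𝕜)
  | insert k s hk ih =>
    simp_rw [Finset.prod_insert hk]
    exact (hM k (mem_insert_self k s)).hadamard (ih fun j hj => hM j (mem_insert_of_mem hj))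

end Matrix.PosSemidef

namespace Equiv.Perm

variable {ι α : Type*}

def fiberStabilizer (f : ι → α) : Subgroup (Perm ι) where
  carrier := {σ | f ∘ σ = f}
  one_mem' := rfl
  mul_mem' {σ τ} hσ hτ := by
    change f ∘ σ ∘ τ = f
    rw [← Function.comp_assoc, show f ∘ σ = f from hσ, hτ]
  inv_mem' {σ} hσ := by
    change f ∘ σ.symm = f
    conv_lhs => rw [← show f ∘ σ = f from hσ]
    ext; simp

instance [Fintype ι] [DecidableEq α] (f : ι → α) : DecidablePred (· ∈ fiberStabilizer f) :=
  fun σ => inferInstanceAs (Decidable (f ∘ σ = f))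

theorem SameCycle.apply_eq_of_comp_eq_self {π : Perm ι} {f : ι → α} (hf : f ∘ π = f) {i j : ι}
    (h : π.SameCycle i j) : f j = f i := by
  obtain ⟨z, rfl⟩ := h
  exact congrFun (zpow_mem (show π ∈ fiberStabilizer f from hf) z) i

theorem sum_character_mul_prod_mul_right {R : Type*} [CommRing R] [Fintype ι]
    (G : Subgroup (Perm ι)) [Fintype G] (ε : Perm ι →* ℤˣ) (A : Matrix ι ι R) (σ : G) :
    ∑ τ : G, ((ε σ : ℤ) : R) * ((ε τ : ℤ) : R) * ∏ i, A (σ.1 i) (τ.1 i) =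
      ∑ π : G, ((ε π : ℤ) : R) * ∏ i, A i (π.1 i) := by
  refine Fintype.sum_equiv (Equiv.mulRight σ⁻¹) _ _ fun τ => ?_
  have hε : ((ε σ : ℤ) : R) * ((ε τ : ℤ) : R) = ((ε (τ * σ⁻¹) : ℤˣ) : ℤ) := by
    simp only [Subgroup.coe_inv, map_mul, map_inv, Int.units_inv_eq_self]
    push_cast; ring
  rw [coe_mulRight, hε, ← Equiv.prod_comp σ.1 fun i => A i (((τ * σ⁻¹ : G) : Perm ι) i)]
  simp

variable [Fintype ι] [DecidableEq ι]

theorem nonempty_support_of_mem_cycleFactorsFinset {π : Perm ι} (c : π.cycleFactorsFinset) :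
    c.1.support.Nonempty :=
  (mem_cycleFactorsFinset_iff.mp c.2).1.nonempty_support

noncomputable def compEqSelfEquiv (π : Perm ι) :
    {f : ι → α // f ∘ π = f} ≃ (π.cycleFactorsFinset → α) × (Function.fixedPoints π → α) where
  toFun f := (fun c => f.1 (nonempty_support_of_mem_cycleFactorsFinset c).choose, fun x => f.1 x)
  invFun p := ⟨fun i => if hi : i ∈ π.support then p.1 ⟨π.cycleOf i,
      cycleOf_mem_cycleFactorsFinset_iff.mpr hi⟩ else p.2 ⟨i, notMem_support.mp hi⟩, by
    funext i
    by_cases hi : i ∈ π.support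
    · simp only [Function.comp_apply, dif_pos (apply_mem_support.mpr hi), dif_pos hi,
        cycleOf_self_apply]
    · have hfix : π i = i := notMem_support.mp hi
      simp only [Function.comp_apply, hfix]⟩
  left_inv f := by
    apply Subtype.ext
    funext i
    by_cases hi : i ∈ π.support
    · simp only [dif_pos hi]
      set c : π.cycleFactorsFinset := ⟨π.cycleOf i, cycleOf_mem_cycleFactorsFinset_iff.mpr hi⟩
      exact SameCycle.apply_eq_of_comp_eq_self f.2
        (mem_support_cycleOf_iff.mp (nonempty_support_of_mem_cycleFactorsFinset c).choose_spec).1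
    · simp only [dif_neg hi]
  right_inv p := by
    refine Prod.ext (funext fun c => ?_) (funext fun x => ?_)
    · have hx := (nonempty_support_of_mem_cycleFactorsFinset c).choose_spec
      simp only [dif_pos (mem_cycleFactorsFinset_support_le c.2 hx)]
      exact congrArg p.1 (Subtype.ext (cycle_is_cycleOf hx c.2).symm)
    · simp [notMem_support.mpr x.2]

end Equiv.Perm

namespace Matrix.PosSemidef

variable {ι 𝕜 : Type*} [Fintype ι] [RCLike 𝕜]

theorem sum_character_mul_prod_nonneg {A : Matrix ι ι 𝕜} (hA : A.PosSemidef)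
    (G : Subgroup (Perm ι)) [Fintype G] (ε : Perm ι →* ℤˣ) :
    0 ≤ ∑ π : G, ((ε π : ℤ) : 𝕜) * ∏ i, A i (π.1 i) := by
  set x : G → 𝕜 := fun σ => ((ε σ : ℤ) : 𝕜)
  set M : Matrix G G 𝕜 := of fun σ τ => ∏ i, A (σ.1 i) (τ.1 i)
  have hM : M.PosSemidef := prod_hadamard univ fun i _ => hA.submatrix fun σ : G => σ.1 i
  have hquad : star x ⬝ᵥ M *ᵥ x =
      Fintype.card G * ∑ π : G, ((ε π : ℤ) : 𝕜) * ∏ i, A i (π.1 i) := by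
    have hx : star x = x := funext fun σ => by simp [x]
    calc star x ⬝ᵥ M *ᵥ x = ∑ σ : G, ∑ τ : G, x σ * x τ * ∏ i, A (σ.1 i) (τ.1 i) := by
          simp only [hx, dotProduct, mulVec, M, of_apply, mul_sum]
          exact sum_congr rfl fun σ _ => sum_congr rfl fun τ _ => by ring
      _ = _ := by
          simp only [x, Perm.sum_character_mul_prod_mul_right, sum_const, card_univ, nsmul_eq_mul]
  have h := hM.dotProduct_mulVec_nonneg x
  rw [hquad] at h
  have hG : (Fintype.card G : 𝕜) ≠ 0 := by simp
  simpa [hG] using mul_nonneg (by positivity : (0 : 𝕜) ≤ (Fintype.card G : 𝕜)⁻¹) h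

end Matrix.PosSemidef

namespace Equiv.Perm

variable {ι : Type} [Fintype ι] [DecidableEq ι]

theorem card_comp_eq_self (α : Type*) [Fintype α] [DecidableEq α] (π : Perm ι) :
    Fintype.card {f : ι → α // f ∘ π = f} = Fintype.card α ^ nCycles π := by
  rw [Fintype.card_congr (compEqSelfEquiv π), Fintype.card_prod, Fintype.card_fun,
    Fintype.card_fun, ← pow_add, nCycles, card_fixedPoints, sum_cycleType, Fintype.card_coe,
    cycleType_def, Multiset.card_map]
  rfl

theorem sum_pow_nCycles_mul_eq_sum_sum_fiberStabilizer {R : Type*} [CommSemiring R]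
    (α : Type*) [Fintype α] [DecidableEq α] (g : Perm ι → R) :
    ∑ π, (Fintype.card α : R) ^ nCycles π * g π = ∑ f : ι → α, ∑ π : fiberStabilizer f, g π := by
  calc ∑ π, (Fintype.card α : R) ^ nCycles π * g π
      = ∑ π : Perm ι, ∑ f : ι → α, if f ∘ π = f then g π else 0 := by
        refine sum_congr rfl fun π _ => ?_
        rw [← sum_filter, sum_const, ← Fintype.card_subtype, card_comp_eq_self, nsmul_eq_mul]
        push_cast; rfl
    _ = ∑ f : ι → α, ∑ π : fiberStabilizer f, g π := by
        rw [sum_comm]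
        refine sum_congr rfl fun f _ => ?_
        rw [← sum_filter]
        exact sum_subtype _ (fun π => by simp only [mem_filter, mem_univ, true_and]; rfl) g

theorem neg_one_pow_card_mul_neg_one_pow_nCycles {R : Type*} [Ring R]
    (π : Perm ι) : (-1 : R) ^ Fintype.card ι * (-1) ^ nCycles π = ((sign π : ℤ) : R) := by
  rw [sign_of_cycleType, ← pow_add]
  push_cast
  refine neg_one_pow_congr ?_
  have := sum_cycleType_le π
  rw [sum_cycleType] at this ⊢
  simp only [nCycles, Nat.even_iff]
  omega

end Equiv.Perm

section

open Perm

variable {ι : Type} [Fintype ι] [DecidableEq ι]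

theorem neg_one_pow_card_mul_aperm_neg {R : Type} [CommRing R] (α : R) (A : Matrix ι ι R) :
    (-1) ^ Fintype.card ι * aperm (-α) A =
      ∑ π : Perm ι, α ^ nCycles π * ((sign π : ℤ) : R) * ∏ i, A i (π i) := by
  rw [aperm, mul_sum]
  refine sum_congr rfl fun π _ => ?_
  rw [neg_pow, ← neg_one_pow_card_mul_neg_one_pow_nCycles]
  ring

namespace Matrix.PosSemidef

variable {𝕜 : Type} [RCLike 𝕜] {A : Matrix ι ι 𝕜}

theorem sum_natCast_pow_nCycles_mul_character_mul_prod_nonneg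
    (hA : A.PosSemidef) (m : ℕ) (ε : Perm ι →* ℤˣ) :
    0 ≤ ∑ π : Perm ι, (m : 𝕜) ^ nCycles π * ((ε π : ℤ) : 𝕜) * ∏ i, A i (π i) := by
  simp_rw [mul_assoc]
  rw [← Fintype.card_fin m, sum_pow_nCycles_mul_eq_sum_sum_fiberStabilizer]
  exact sum_nonneg fun f _ => hA.sum_character_mul_prod_nonneg _ ε

theorem aperm_natCast_nonneg (hA : A.PosSemidef) (m : ℕ) :
    0 ≤ aperm (m : 𝕜) A := by
  simpa [aperm] using hA.sum_natCast_pow_nCycles_mul_character_mul_prod_nonneg m 1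

theorem neg_one_pow_card_mul_aperm_neg_natCast_nonneg (hA : A.PosSemidef)
    (m : ℕ) : 0 ≤ (-1) ^ Fintype.card ι * aperm (-(m : 𝕜)) A := by
  rw [neg_one_pow_card_mul_aperm_neg]
  exact hA.sum_natCast_pow_nCycles_mul_character_mul_prod_nonneg m sign

end Matrix.PosSemidef

end

/-- For p.s.d. Hermitian `A` and a nonnegative integer `α = m`,
`per_m A ≥ 0` and `(-1)^n per_{-m} A ≥ 0`. -/
theorem stmt17 (n m : ℕ) (A : Matrix (Fin n) (Fin n) ℂ) (hA : A.PosSemidef) :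
    0 ≤ (aperm (m : ℂ) A).re ∧ 0 ≤ ((-1) ^ n * aperm (-(m : ℂ)) A).re := by
  have hneg := hA.neg_one_pow_card_mul_aperm_neg_natCast_nonneg m
  rw [Fintype.card_fin] at hneg
  exact ⟨(Complex.nonneg_iff.mp (hA.aperm_natCast_nonneg m)).1, (Complex.nonneg_iff.mp hneg).1⟩
end

section
/- Let λ and μ be partitions of n, where λ arises from μ by replacing two parts of μ by their sum, and let A be a positive semi-definite Hermitian n×n matrix. Define d(λ) as the average over set partitions (I_1,…,I_k) of {1,…,n} with |I_j| = λ_j of Π_j det(A[I_j]). Then d(λ) ≤ d(μ). -/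
open Finset Matrix
open scoped ComplexOrder

/-!
Group the ordered set partitions of type `μ` according to the partition of type `λ` obtained by
merging the two distinguished parts: every partition of type `λ` arises from exactly
`(a + b).choose a` of them, by choosing which `a` elements of its merged block form the first
part. By Fischer's inequality `det A[I ∪ J] ≤ det A[I] * det A[J]` for disjoint `I`, `J`, each
product of minors over a `μ`-partition dominates that of its merge, and averaging gives
`d(λ) ≤ d(μ)`. Fischer's inequality follows from the Schur complement formula
`det M = det D * det (A - B D⁻¹ Bᴴ)` and the monotonicity `det X ≤ det (X + Y)` for positive
semidefinite `X`, `Y`, which reduces to `1 ≤ det (1 + Q)` after conjugating by `X ^ (-1/2)`.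
-/

namespace Matrix
variable {𝕜 m : Type*} [RCLike 𝕜] [Fintype m] [DecidableEq m]

open scoped Pointwise in
lemma PosSemidef.one_le_det_one_add_s19 {Q : Matrix m m 𝕜} (hQ : Q.PosSemidef) :
    1 ≤ (1 + Q).det := by
  have hH : (1 + Q).IsHermitian := isHermitian_one.add hQ.1
  have hspec : spectrum ℝ (1 + Q) = ({1} : Set ℝ) + Set.range hQ.1.eigenvalues := by
    rw [← hQ.1.spectrum_real_eq_range_eigenvalues, spectrum.singleton_add_eq, map_one]
  have heig : ∀ i, 1 ≤ hH.eigenvalues i := fun i => by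
    obtain ⟨_, rfl, _, ⟨j, rfl⟩, hj⟩ := hspec ▸ hH.eigenvalues_mem_spectrum_real i
    simpa [← hj] using hQ.eigenvalues_nonneg j
  rw [hH.det_eq_prod_eigenvalues, ← RCLike.ofReal_prod, ← RCLike.ofReal_one,
    RCLike.ofReal_le_ofReal]
  exact one_le_prod fun i _ => heig i

open scoped MatrixOrder in
lemma PosSemidef.det_le_det_add_s19 {S P : Matrix m m 𝕜} (hS : S.PosSemidef) (hP : P.PosSemidef) :
    S.det ≤ (S + P).det := by
  by_cases hS0 : S.det = 0
  · exact hS0 ▸ (hS.add hP).det_nonneg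
  set R := CFC.sqrt S
  have hRR : R * R = S := CFC.sqrt_mul_sqrt_self S hS.nonneg
  have hR : IsUnit R.det :=
    isUnit_iff_ne_zero.mpr fun h => hS0 (by rw [← hRR, det_mul, h, zero_mul])
  have hQ : (R⁻¹ * P * R⁻¹).PosSemidef := by
    have := hP.mul_mul_conjTranspose_same R⁻¹
    rwa [conjTranspose_nonsing_inv, (CFC.sqrt_nonneg S).posSemidef.1.eq] at this
  have hSP : R * (1 + R⁻¹ * P * R⁻¹) * R = S + P := by
    rw [mul_add, add_mul, mul_one, hRR, ← mul_assoc R (R⁻¹ * P),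
      nonsing_inv_mul_cancel_right _ _ hR, mul_nonsing_inv_cancel_left _ _ hR]
  calc S.det = 1 * S.det := (one_mul _).symm
    _ ≤ (1 + R⁻¹ * P * R⁻¹).det * S.det := by
      gcongr
      exacts [hS.det_nonneg, hQ.one_le_det_one_add_s19]
    _ = (S + P).det := by rw [← hSP, ← hRR, det_mul, det_mul, det_mul]; ring

lemma PosSemidef.det_le_det_toBlocks₁₁_mul_det_toBlocks₂₂ {m' : Type*} [Fintype m']
    [DecidableEq m'] {M : Matrix (m ⊕ m') (m ⊕ m') 𝕜} (hM : M.PosSemidef) :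
    M.det ≤ M.toBlocks₁₁.det * M.toBlocks₂₂.det := by
  set A := M.toBlocks₁₁
  set B := M.toBlocks₁₂
  set D := M.toBlocks₂₂
  by_cases hD0 : D.det = 0
  · have hM0 : M.det = 0 := by
      by_contra h
      exact ((hM.posDef_iff_det_ne_zero.mpr h).submatrix Sum.inr_injective).det_pos.ne' hD0
    rw [hM0, hD0, mul_zero]
  have hD : D.PosDef := (hM.submatrix Sum.inr).posDef_iff_det_ne_zero.mpr hD0
  have : Invertible D := D.invertibleOfIsUnitDet (isUnit_iff_ne_zero.mpr hD0)
  have hM' : fromBlocks A B Bᴴ D = M := by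
    rw [(isHermitian_fromBlocks_iff.mp ((fromBlocks_toBlocks M).symm ▸ hM.1)).2.1,
      fromBlocks_toBlocks]
  have hSchur : (A - B * D⁻¹ * Bᴴ).PosSemidef :=
    (PosDef.fromBlocks₂₂ _ B hD).mp (hM' ▸ hM)
  have hle := hSchur.det_le_det_add_s19 (hD.posSemidef.inv.mul_mul_conjTranspose_same B)
  rw [sub_add_cancel] at hle
  calc M.det = D.det * (A - B * D⁻¹ * Bᴴ).det := by
        rw [← hM', det_fromBlocks₂₂, invOf_eq_nonsing_inv]
    _ ≤ D.det * A.det := mul_le_mul_of_nonneg_left hle hD.posSemidef.det_nonneg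
    _ = A.det * D.det := mul_comm _ _

end Matrix

section PrincipalMinors
variable {𝕜 ι κ : Type} [RCLike 𝕜] {A : Matrix ι ι 𝕜}

lemma Matrix.PosSemidef.subm (hA : A.PosSemidef) (I : Finset ι) : (subm A I).PosSemidef :=
  hA.submatrix Subtype.val

variable [DecidableEq ι]

lemma det_subm_union_le (hA : A.PosSemidef) {I J : Finset ι} (hIJ : Disjoint I J) :
    (subm A (I ∪ J)).det ≤ (subm A I).det * (subm A J).det := by
  let e := Equiv.Finset.union I J hIJ
  rw [← det_submatrix_equiv_self e]
  exact ((hA.subm _).submatrix e).det_le_det_toBlocks₁₁_mul_det_toBlocks₂₂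

variable [Fintype ι]

lemma det_subm_filter_mem_le [DecidableEq κ] (hA : A.PosSemidef) (g : ι → κ) (s : Finset κ) :
    (subm A {i | g i ∈ s}).det ≤ ∏ x ∈ s, (subm A {i | g i = x}).det := by
  induction s using Finset.induction_on with
  | empty => exact (det_eq_one_of_card_eq_zero (by simp)).le
  | insert x s hx ih =>
    have hsplit : ({i | g i ∈ insert x s} : Finset ι) =
        ({i | g i = x} : Finset ι) ∪ ({i | g i ∈ s} : Finset ι) := by
      ext; simp
    have hdisj : Disjoint ({i | g i = x} : Finset ι) ({i | g i ∈ s} : Finset ι) :=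
      disjoint_filter.mpr fun _ _ hi hs => hx (hi ▸ hs)
    rw [hsplit, prod_insert hx]
    exact (det_subm_union_le hA hdisj).trans
      (mul_le_mul_of_nonneg_left ih (hA.subm _).det_nonneg)

variable [Fintype κ] [DecidableEq κ]

def blockDetProd (A : Matrix ι ι 𝕜) (f : ι → κ) : 𝕜 :=
  ∏ j, (subm A {i | f i = j}).det

lemma blockDetProd_comp_le {κ' : Type} [Fintype κ'] [DecidableEq κ'] (hA : A.PosSemidef)
    (φ : κ' → κ) (g : ι → κ') : blockDetProd A (φ ∘ g) ≤ blockDetProd A g := by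
  rw [blockDetProd, blockDetProd, ← prod_fiberwise univ φ]
  refine prod_le_prod (fun _ _ => (hA.subm _).det_nonneg) fun j _ => ?_
  have hfiber : ({i | (φ ∘ g) i = j} : Finset ι) =
      ({i | g i ∈ univ.filter fun x => φ x = j} : Finset ι) := by
    ext; simp
  rw [hfiber]
  exact det_subm_filter_mem_le hA g _

end PrincipalMinors

section Merge
variable {m : ℕ} (p : Fin (m + 1))

lemma Fin.predAbove_eq_self_iff {x : Fin (m + 2)} :
    p.predAbove x = p ↔ x = p.castSucc ∨ x = p.succ := by
  refine ⟨fun h => or_iff_not_imp_left.mpr fun hx => ?_, ?_⟩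
  · rw [← Fin.succAbove_predAbove hx, h, Fin.succAbove_castSucc_self]
  · rintro (rfl | rfl) <;> simp

lemma Fin.predAbove_eq_predAbove_iff {x y : Fin (m + 2)} (hx : p.predAbove x ≠ p) :
    p.predAbove y = p.predAbove x ↔ y = x := by
  refine ⟨fun h => ?_, congrArg _⟩
  have hx' : x ≠ p.castSucc := fun h' => hx (h' ▸ Fin.predAbove_castSucc_self p)
  have hy : y ≠ p.castSucc := fun h' => hx (h ▸ h' ▸ Fin.predAbove_castSucc_self p)
  rw [← Fin.succAbove_predAbove hx', ← Fin.succAbove_predAbove hy, h]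

/-- `u` arises from `t` by splitting its part `p` in two: `p.predAbove` merges the parts
`p.castSucc` and `p.succ` of `Fin (m + 2)` back into `p` and relabels the others monotonically. -/
def SplitsAt (t : Fin (m + 1) → ℕ) (u : Fin (m + 2) → ℕ) : Prop :=
  t p = u p.castSucc + u p.succ ∧ ∀ x, p.predAbove x ≠ p → u x = t (p.predAbove x)

variable {ι : Type} [Fintype ι]

lemma filter_predAbove_eq_predAbove (g : ι → Fin (m + 2)) {x : Fin (m + 2)}
    (hx : p.predAbove x ≠ p) :
    ({i | p.predAbove (g i) = p.predAbove x} : Finset ι) = ({i | g i = x} : Finset ι) := by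
  ext
  simp [Fin.predAbove_eq_predAbove_iff p hx]

variable [DecidableEq ι]

def partitionsOfType {k : ℕ} (t : Fin k → ℕ) : Finset (ι → Fin k) :=
  {f | ∀ j, #{i | f i = j} = t j}

lemma card_filter_predAbove_eq_self (g : ι → Fin (m + 2)) :
    #{i | p.predAbove (g i) = p} = #{i | g i = p.castSucc} + #{i | g i = p.succ} := by
  rw [← card_union_of_disjoint (disjoint_filter.mpr fun _ _ h1 h2 =>
    (Fin.castSucc_lt_succ (i := p)).ne (h1.symm.trans h2))]
  congr 1
  ext
  simp [Fin.predAbove_eq_self_iff]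

def splitAt (f : ι → Fin (m + 1)) (T : Finset ι) : ι → Fin (m + 2) :=
  fun i => if i ∈ T then p.castSucc else p.castSucc.succAbove (f i)

lemma predAbove_comp_splitAt {f : ι → Fin (m + 1)} {T : Finset ι}
    (hT : T ⊆ ({i | f i = p} : Finset ι)) :
    p.predAbove ∘ splitAt p f T = f := by
  ext1 i
  by_cases hi : i ∈ T
  · simpa [splitAt, hi] using (mem_filter.mp (hT hi)).2.symm
  · simp [splitAt, hi, Fin.predAbove_succAbove]

lemma filter_splitAt_eq_castSucc (f : ι → Fin (m + 1)) (T : Finset ι) :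
    ({i | splitAt p f T i = p.castSucc} : Finset ι) = T := by
  ext i
  by_cases hi : i ∈ T <;> simp [splitAt, hi, Fin.succAbove_ne]

lemma splitAt_predAbove_comp (g : ι → Fin (m + 2)) :
    splitAt p (p.predAbove ∘ g) {i | g i = p.castSucc} = g := by
  ext1 i
  by_cases hi : g i = p.castSucc
  · simp [splitAt, hi]
  · simp [splitAt, hi, Fin.succAbove_predAbove hi]

variable {t : Fin (m + 1) → ℕ} {u : Fin (m + 2) → ℕ}

lemma predAbove_comp_mem_partitionsOfType (h : SplitsAt p t u) {g : ι → Fin (m + 2)}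
    (hg : g ∈ partitionsOfType u) :
    p.predAbove ∘ g ∈ partitionsOfType t := by
  simp only [partitionsOfType, mem_filter, mem_univ, true_and, Function.comp_apply] at hg ⊢
  intro j
  by_cases hj : j = p
  · rw [hj, card_filter_predAbove_eq_self, hg, hg, h.1]
  · obtain ⟨x, rfl⟩ : ∃ x, p.predAbove x = j := ⟨_, Fin.predAbove_succAbove p j⟩
    rw [filter_predAbove_eq_predAbove p g hj, hg, h.2 x hj]

lemma mem_partitionsOfType_of_predAbove_comp (h : SplitsAt p t u) {g : ι → Fin (m + 2)}
    (hf : p.predAbove ∘ g ∈ partitionsOfType t) (hcs : #{i | g i = p.castSucc} = u p.castSucc) :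
    g ∈ partitionsOfType u := by
  simp only [partitionsOfType, mem_filter, mem_univ, true_and, Function.comp_apply] at hf ⊢
  intro x
  by_cases hx : p.predAbove x = p
  · rcases (Fin.predAbove_eq_self_iff p).mp hx with rfl | rfl
    · exact hcs
    · have hp := card_filter_predAbove_eq_self p g
      rw [hf p, h.1, hcs] at hp
      omega
  · rw [← filter_predAbove_eq_predAbove p g hx, hf, h.2 x hx]

lemma card_filter_predAbove_comp_eq (h : SplitsAt p t u) {f : ι → Fin (m + 1)}
    (hf : f ∈ partitionsOfType t) :
    #{g ∈ partitionsOfType u | p.predAbove ∘ g = f} = (t p).choose (u p.castSucc) := by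
  have hfp : #{i | f i = p} = t p := (mem_filter.mp hf).2 p
  rw [← hfp, ← card_powersetCard]
  refine card_nbij' (fun g => ({i | g i = p.castSucc} : Finset ι)) (splitAt p f) ?_ ?_ ?_ ?_
  · rintro g hg
    obtain ⟨hgu, rfl⟩ := mem_filter.mp hg
    refine mem_powersetCard.mpr ⟨fun i hi => ?_, (mem_filter.mp hgu).2 _⟩
    simp [(mem_filter.mp hi).2]
  · intro T hT
    obtain ⟨hTf, hTcard⟩ := mem_powersetCard.mp hT
    have hsplit := predAbove_comp_splitAt p hTf
    have hcs : #{i | splitAt p f T i = p.castSucc} = u p.castSucc := by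
      rw [filter_splitAt_eq_castSucc, hTcard]
    exact mem_filter.mpr
      ⟨mem_partitionsOfType_of_predAbove_comp p h (by rwa [hsplit]) hcs, hsplit⟩
  · rintro g hg
    obtain ⟨-, rfl⟩ := mem_filter.mp hg
    exact splitAt_predAbove_comp p g
  · intro T _
    exact filter_splitAt_eq_castSucc p f T

end Merge

lemma div_card_le_div_card_of_fiberwise {α β : Type*} [DecidableEq α] {P : Finset α}
    {Q : Finset β} (π : β → α) (F : α → ℝ) (G : β → ℝ) {C : ℕ} (hC : 0 < C)
    (hπ : ∀ g ∈ Q, π g ∈ P) (hcard : ∀ f ∈ P, #{g ∈ Q | π g = f} = C)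
    (hFG : ∀ g ∈ Q, F (π g) ≤ G g) :
    (∑ f ∈ P, F f) / #P ≤ (∑ g ∈ Q, G g) / #Q := by
  have hQ : #Q = C * #P := by
    rw [card_eq_sum_card_fiberwise hπ, sum_congr rfl hcard, sum_const, smul_eq_mul, mul_comm]
  have hsum : C * ∑ f ∈ P, F f ≤ ∑ g ∈ Q, G g := calc
    C * ∑ f ∈ P, F f = ∑ f ∈ P, ∑ g ∈ Q with π g = f, F (π g) := by
      rw [mul_sum]
      refine sum_congr rfl fun f hf => ?_
      rw [sum_congr rfl fun g hg => by rw [(mem_filter.mp hg).2], sum_const, hcard f hf,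
        nsmul_eq_mul]
    _ = ∑ g ∈ Q, F (π g) := sum_fiberwise_of_maps_to hπ _
    _ ≤ ∑ g ∈ Q, G g := sum_le_sum hFG
  calc (∑ f ∈ P, F f) / #P = (C * ∑ f ∈ P, F f) / #Q := by
        rw [hQ, Nat.cast_mul, mul_div_mul_left _ _ (Nat.cast_ne_zero.mpr hC.ne')]
    _ ≤ (∑ g ∈ Q, G g) / #Q := div_le_div_of_nonneg_right hsum (Nat.cast_nonneg _)

theorem avgDet_le_avgDet_of_splitsAt {n m : ℕ} {A : Matrix (Fin n) (Fin n) ℂ}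
    (hA : A.PosSemidef) (p : Fin (m + 1)) {t : Fin (m + 1) → ℕ} {u : Fin (m + 2) → ℕ}
    (h : SplitsAt p t u) : avgDet A t ≤ avgDet A u :=
  div_card_le_div_card_of_fiberwise (P := partitionsOfType t) (Q := partitionsOfType u)
    (p.predAbove ∘ ·) (fun f => (blockDetProd A f).re) (fun g => (blockDetProd A g).re)
    (Nat.choose_pos (h.1 ▸ Nat.le_add_right _ _))
    (fun _ hg => predAbove_comp_mem_partitionsOfType p h hg)
    (fun _ hf => card_filter_predAbove_comp_eq p h hf)
    (fun g _ => (Complex.le_def.mp (blockDetProd_comp_le hA p.predAbove g)).1)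

theorem stmt19_general (n k : ℕ) (s : Fin k → ℕ) (a b : ℕ)
    (A : Matrix (Fin n) (Fin n) ℂ) (hA : A.PosSemidef) :
    avgDet A (Fin.snoc s (a + b)) ≤ avgDet A (Fin.snoc (Fin.snoc s a) b) := by
  refine avgDet_le_avgDet_of_splitsAt hA (Fin.last k) ⟨by simp, fun x hx => ?_⟩
  induction x using Fin.lastCases with
  | last => simp at hx
  | cast y =>
    induction y using Fin.lastCases with
    | last => simp at hx
    | cast z => simp

/-- If the partition `λ = (s₁, …, s_k, a + b)` of `n` arises from
`μ = (s₁, …, s_k, a, b)` by merging two parts, then for p.s.d. Hermitian `A`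
the averaged determinant satisfies `d(λ) ≤ d(μ)`. -/
theorem stmt19 (n k : ℕ) (s : Fin k → ℕ) (a b : ℕ) (ha : 1 ≤ a) (hb : 1 ≤ b)
    (hs : ∀ j, 1 ≤ s j) (hsum : (∑ j, s j) + a + b = n)
    (A : Matrix (Fin n) (Fin n) ℂ) (hA : A.PosSemidef) :
    avgDet A (Fin.snoc s (a + b)) ≤ avgDet A (Fin.snoc (Fin.snoc s a) b) :=
  stmt19_general n k s a b A hA
end
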